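/- Let X be a finite set, λ : X → [0,1], H ⊆ X, and let W_1, …, W_s ⊆ X. Run the procedure H_1 = H and, for i = 1,…,s, b_i = b(W_i, H_i, λ) and H_{i+1} = (H_i)_{≥b_i} \ W_i. If W_i ⊇ (H_i)_{<b_i} for every i ∈ [s], then λ(H \ (W_1 ∪ … ∪ W_s)) ≤ 2^{−s} λ(H); equivalently, λ(H ∩ (W_1 ∪ … ∪ W_s)) ≥ (1 − 2^{−s}) λ(H). -/

import Mathlib

open Finset

variable {α : Type*}

/-- `wsum lam S = ∑_{x ∈ S} lam x`. -/
noncomputable def wsum (lam : α → ℝ) (S : Finset α) : ℝ := ∑ x ∈ S, lam x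

/-- Probability that the random subset `X_q` equals `W`. -/
noncomputable def prb [Fintype α] (q : ℝ) (W : Finset α) : ℝ :=
  q ^ W.card * (1 - q) ^ (Fintype.card α - W.card)

/-- `G` is a cover of the family `ℋ`. -/
def IsCover (G ℋ : Finset (Finset α)) : Prop := ∀ H ∈ ℋ, ∃ B ∈ G, B ⊆ H

/-- `ℋ` is `p`-small. -/
def IsSmall (p : ℝ) (ℋ : Finset (Finset α)) : Prop :=
  ∃ G : Finset (Finset α), IsCover G ℋ ∧ ∑ B ∈ G, p ^ B.card ≤ 1 / 2

/-- `l` is an ordering of `H` with weights `lam` in non-increasing order. -/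
def IsOrdering [DecidableEq α] (lam : α → ℝ) (H : Finset α) (l : List α) : Prop :=
  l.Nodup ∧ l.toFinset = H ∧ l.Pairwise fun a b => lam b ≤ lam a

/-- The cut index: the smallest number `k` of removed top elements so that
`lam (W ∩ H_{≥ k+1}) ≥ (1/2) lam (H_{≥ k+1})`.  (So `b(W,H,λ) = cutIndex + 1`.) -/
noncomputable def cutIndex [DecidableEq α] (lam : α → ℝ) (W : Finset α) (l : List α) : ℕ :=
  sInf {k : ℕ | (1 / 2) * wsum lam (l.drop k).toFinset ≤ wsum lam (W ∩ (l.drop k).toFinset)}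

/-- One step of the procedure: `H_{i+1} = (H_i)_{≥ b_i} \ W_i`, as ordered lists. -/
noncomputable def stepList [DecidableEq α] (lam : α → ℝ) (W : Finset α) (l : List α) : List α :=
  (l.drop (cutIndex lam W l)).filter fun x => decide (x ∉ W)

/-- The procedure: `procList lam Ws l0 i` is (the ordered list of) `H_{i+1}`, `H_1 = l0`. -/
noncomputable def procList [DecidableEq α] (lam : α → ℝ) (Ws : ℕ → Finset α) (l0 : List α) :
    ℕ → List α
  | 0 => l0
  | i + 1 => stepList lam (Ws i) (procList lam Ws l0 i)

/-- `bIdx lam Ws l0 i = b(W_{i+1}, H_{i+1}, lam) - 1` (0-indexed version of `b_i`). -/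
noncomputable def bIdx [DecidableEq α] (lam : α → ℝ) (Ws : ℕ → Finset α) (l0 : List α)
    (i : ℕ) : ℕ :=
  cutIndex lam (Ws i) (procList lam Ws l0 i)

/-- `Rfrag lam Ws l0 i = R_{i+1}(W, H) = (H_{i+1})_{< b_{i+1}}` (0-indexed). -/
noncomputable def Rfrag [DecidableEq α] (lam : α → ℝ) (Ws : ℕ → Finset α) (l0 : List α)
    (i : ℕ) : Finset α :=
  ((procList lam Ws l0 i).take (bIdx lam Ws l0 i)).toFinset

/-- Extend a tuple indexed by `Fin s` to one indexed by `ℕ`. -/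
def extT {s : ℕ} (Ws : Fin s → Finset α) : ℕ → Finset α :=
  fun i => if h : i < s then Ws ⟨i, h⟩ else ∅

/-- `Z` is `(b, t)`-feasible: there are `W'_i ⊆ Z_i` with `|W'_i| = |Z_i| - t_i` and `H' ∈ ℋ`
such that `b = b(W', H')` and `Z_i ⊇ R_i(W', H')` for all `i`. -/
def Feasible [DecidableEq α] (ℋ : Finset (Finset α)) (lam : Finset α → α → ℝ)
    (ord : Finset α → List α) {s : ℕ} (b t : Fin s → ℕ) (Z : Fin s → Finset α) : Prop :=
  ∃ (W' : Fin s → Finset α) (H' : Finset α), H' ∈ ℋ ∧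
    (∀ i : Fin s, W' i ⊆ Z i ∧ (W' i).card = (Z i).card - t i) ∧
    (∀ i : Fin s, b i = bIdx (lam H') (extT W') (ord H') i) ∧
    (∀ i : Fin s, Rfrag (lam H') (extT W') (ord H') i ⊆ Z i)

/-- `T` is a tower of fragments of `(Ws, H)`. -/
def IsTower [DecidableEq α] (ℋ : Finset (Finset α)) (lam : Finset α → α → ℝ)
    (ord : Finset α → List α) {s : ℕ} (Ws : Fin s → Finset α) (H : Finset α)
    (T : Fin s → Finset α) : Prop :=
  (∃ b : Fin s → ℕ,
      Feasible ℋ lam ord b (fun i => (T i).card) (fun i => Ws i ∪ T i)) ∧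
    univ.biUnion T ⊆ H

/-- Lexicographic order on size vectors. -/
def lexLe {s : ℕ} (a c : Fin s → ℕ) : Prop :=
  a = c ∨ ∃ i : Fin s, a i < c i ∧ ∀ j : Fin s, j < i → a j = c j

/-- `T` is a minimum tower of fragments of `(Ws, H)`. -/
def IsMinTower [DecidableEq α] (ℋ : Finset (Finset α)) (lam : Finset α → α → ℝ)
    (ord : Finset α → List α) {s : ℕ} (Ws : Fin s → Finset α) (H : Finset α)
    (T : Fin s → Finset α) : Prop :=
  IsTower ℋ lam ord Ws H T ∧
    ∀ T' : Fin s → Finset α, IsTower ℋ lam ord Ws H T' →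
      lexLe (fun i => (T i).card) (fun i => (T' i).card)

/-- `(W_1, …, W_s)` is bad: no `H ∈ ℋ` captures weight at least `1 - 2^{-s}`. -/
def IsBad [DecidableEq α] (ℋ : Finset (Finset α)) (lam : Finset α → α → ℝ) {s : ℕ}
    (Ws : Fin s → Finset α) : Prop :=
  ∀ H ∈ ℋ, wsum (lam H) (univ.biUnion Ws ∩ H) < 1 - (1 / 2) ^ s

/-!
Each step of the procedure keeps at most half of the weight: by the choice of `b_i`, the set
`W_i` carries at least half the weight of `(H_i)_{≥ b_i}`, so `H_{i+1} = (H_i)_{≥ b_i} \ W_i`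
weighs at most half of `H_i`, and `λ(H_{s+1}) ≤ 2^{-s} λ(H)`. Since the discarded prefix
`(H_i)_{< b_i}` lies in `W_i`, an element of `H` outside every `W_i` is never discarded, so
`H \ (W_1 ∪ … ∪ W_s) ⊆ H_{s+1}`.
-/

lemma wsum_le_wsum_of_subset {lam : α → ℝ} (hlam : ∀ x, 0 ≤ lam x) {S T : Finset α}
    (hST : S ⊆ T) : wsum lam S ≤ wsum lam T :=
  sum_le_sum_of_subset_of_nonneg hST fun x _ _ => hlam x

section Procedure

variable [DecidableEq α] (lam : α → ℝ)

lemma half_wsum_le_wsum_inter_drop_cutIndex (W : Finset α) (l : List α) :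
    (1 / 2) * wsum lam (l.drop (cutIndex lam W l)).toFinset ≤
      wsum lam (W ∩ (l.drop (cutIndex lam W l)).toFinset) := by
  have hlength : l.length ∈ {k : ℕ | (1 / 2) * wsum lam (l.drop k).toFinset ≤
      wsum lam (W ∩ (l.drop k).toFinset)} := by
    simp [wsum]
  exact Nat.sInf_mem ⟨_, hlength⟩

lemma stepList_toFinset (W : Finset α) (l : List α) :
    (stepList lam W l).toFinset = (l.drop (cutIndex lam W l)).toFinset \ W := by
  ext x
  simp [stepList]

lemma wsum_stepList_le (hlam : ∀ x, 0 ≤ lam x) (W : Finset α) (l : List α) :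
    wsum lam (stepList lam W l).toFinset ≤ (1 / 2) * wsum lam l.toFinset := by
  set D := (l.drop (cutIndex lam W l)).toFinset
  have hhalf : (1 / 2) * wsum lam D ≤ wsum lam (W ∩ D) :=
    half_wsum_le_wsum_inter_drop_cutIndex lam W l
  have hsplit : wsum lam (D ∩ W) + wsum lam (D \ W) = wsum lam D :=
    sum_inter_add_sum_sdiff D W lam
  have hD : wsum lam D ≤ wsum lam l.toFinset :=
    wsum_le_wsum_of_subset hlam fun x hx =>
      List.mem_toFinset.mpr (List.mem_of_mem_drop (List.mem_toFinset.mp hx))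
  rw [inter_comm] at hsplit
  rw [stepList_toFinset]
  linarith

lemma mem_stepList {W : Finset α} {l : List α}
    (hprefix : (l.take (cutIndex lam W l)).toFinset ⊆ W) {x : α} (hxl : x ∈ l) (hxW : x ∉ W) :
    x ∈ stepList lam W l := by
  rw [← List.take_append_drop (cutIndex lam W l) l, List.mem_append] at hxl
  rcases hxl with hxtake | hxdrop
  · exact absurd (hprefix (List.mem_toFinset.mpr hxtake)) hxW
  · simpa [stepList] using ⟨hxdrop, hxW⟩

lemma wsum_procList_le (hlam : ∀ x, 0 ≤ lam x) (Ws : ℕ → Finset α) (l : List α)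
    (n : ℕ) : wsum lam (procList lam Ws l n).toFinset ≤ (1 / 2) ^ n * wsum lam l.toFinset := by
  induction n with
  | zero => simp [procList]
  | succ n ih =>
    calc wsum lam (procList lam Ws l (n + 1)).toFinset
        ≤ (1 / 2) * wsum lam (procList lam Ws l n).toFinset := wsum_stepList_le lam hlam _ _
      _ ≤ (1 / 2) * ((1 / 2) ^ n * wsum lam l.toFinset) := by gcongr
      _ = (1 / 2) ^ (n + 1) * wsum lam l.toFinset := by ring

lemma mem_procList {Ws : ℕ → Finset α} {l : List α} {n : ℕ}
    (hcover : ∀ i < n, Rfrag lam Ws l i ⊆ Ws i) {x : α} (hxl : x ∈ l)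
    (hxWs : ∀ i < n, x ∉ Ws i) : x ∈ procList lam Ws l n := by
  induction n with
  | zero => exact hxl
  | succ n ih =>
    exact mem_stepList lam (hcover n n.lt_succ_self)
      (ih (fun i hi => hcover i (hi.trans n.lt_succ_self))
        fun i hi => hxWs i (hi.trans n.lt_succ_self))
      (hxWs n n.lt_succ_self)

end Procedure

lemma extT_of_lt {s : ℕ} (Ws : Fin s → Finset α) {i : ℕ} (hi : i < s) :
    extT Ws i = Ws ⟨i, hi⟩ :=
  dif_pos hi

open scoped Classical

theorem halving_along_procedure_general {α : Type*} [DecidableEq α]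
    (lam : α → ℝ) (h01 : ∀ x, 0 ≤ lam x ∧ lam x ≤ 1)
    (l : List α)
    {s : ℕ} (Ws : Fin s → Finset α)
    (hcover : ∀ i : Fin s, Rfrag lam (extT Ws) l i ⊆ Ws i) :
    wsum lam (l.toFinset \ Finset.univ.biUnion Ws) ≤ (1 / 2) ^ s * wsum lam l.toFinset := by
  have hlam : ∀ x, 0 ≤ lam x := fun x => (h01 x).1
  have hsurvivors : l.toFinset \ univ.biUnion Ws ⊆ (procList lam (extT Ws) l s).toFinset := by
    intro x hx
    simp only [mem_sdiff, List.mem_toFinset, mem_biUnion, mem_univ, true_and, not_exists] at hx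
    refine List.mem_toFinset.mpr (mem_procList lam (fun i hi => ?_) hx.1 fun i hi => ?_)
    · rw [extT_of_lt Ws hi]
      exact hcover ⟨i, hi⟩
    · rw [extT_of_lt Ws hi]
      exact hx.2 ⟨i, hi⟩
  calc wsum lam (l.toFinset \ univ.biUnion Ws)
      ≤ wsum lam (procList lam (extT Ws) l s).toFinset := wsum_le_wsum_of_subset hlam hsurvivors
    _ ≤ (1 / 2) ^ s * wsum lam l.toFinset := wsum_procList_le lam hlam _ l s

theorem halving_along_procedure {α : Type*} [Fintype α] [DecidableEq α]
    (lam : α → ℝ) (h01 : ∀ x, 0 ≤ lam x ∧ lam x ≤ 1)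
    (l : List α) (hnd : l.Nodup) (hsorted : l.Pairwise fun a b => lam b ≤ lam a)
    {s : ℕ} (Ws : Fin s → Finset α)
    (hcover : ∀ i : Fin s, Rfrag lam (extT Ws) l i ⊆ Ws i) :
    wsum lam (l.toFinset \ Finset.univ.biUnion Ws) ≤ (1 / 2) ^ s * wsum lam l.toFinset :=
  halving_along_procedure_general lam h01 l Ws hcover
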